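/- For any nonempty quasi-order (Q,≤_Q), define f : T_f(Q) → i^F_{ω^ω}(Q) recursively by f(·q) = ⟨q⟩ (the sequence of length 1 with value q) and f(·(τ_0,…,τ_{k-1})) = (f(τ_0) + f(τ_1) + ⋯ + f(τ_{k-1}))^ω. Then f is a well-defined order-embedding: for all σ, τ ∈ T_f(Q), σ ≤_T τ if and only if f(σ) ≼ f(τ). -/

import Mathlib

universe u v

open Ordinal

/-- A quasi-order: a reflexive transitive binary relation. -/
def IsQO {Q : Type u} (le : Q → Q → Prop) : Prop :=
  Reflexive le ∧ Transitive le

/-- Finite leaf-labelled trees over `Q`: leaves carry labels from `Q`, and an internal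
node carries a finite nonempty list of children (encoded as a head child plus the list
of remaining children). -/
inductive LTree (Q : Type u) : Type u
  | leaf : Q → LTree Q
  | node : LTree Q → List (LTree Q) → LTree Q

mutual
/-- The tree-homomorphism quasi-order `≤_T` on finite leaf-labelled trees:
`·x ≤_T ·y` iff `le x y`; `·x ≤_T ·(τ₀,…,τ_{l-1})` iff `·x ≤_T τ_j` for some `j < l`;
`·(σ₀,…,σ_{k-1}) ≤_T ·(τ₀,…,τ_{l-1})` iff for every `i < k` there is `j < l` with
`σᵢ ≤_T τ_j`; and `·(σ₀,…,σ_{k-1}) ≤_T ·y` never holds. -/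
inductive TreeLE {Q : Type u} (le : Q → Q → Prop) : LTree Q → LTree Q → Prop
  | leaf {x y : Q} : le x y → TreeLE le (.leaf x) (.leaf y)
  | leafNode {x : Q} {t : LTree Q} {ts : List (LTree Q)} :
      TreeMemLE le (.leaf x) (t :: ts) → TreeLE le (.leaf x) (.node t ts)
  | node {s t : LTree Q} {ss ts : List (LTree Q)} :
      TreeAllLE le (s :: ss) (t :: ts) → TreeLE le (.node s ss) (.node t ts)

/-- `TreeMemLE le a l` means `∃ b ∈ l, TreeLE le a b`. -/
inductive TreeMemLE {Q : Type u} (le : Q → Q → Prop) : LTree Q → List (LTree Q) → Prop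
  | head {a b : LTree Q} {l : List (LTree Q)} : TreeLE le a b → TreeMemLE le a (b :: l)
  | tail {a b : LTree Q} {l : List (LTree Q)} : TreeMemLE le a l → TreeMemLE le a (b :: l)

/-- `TreeAllLE le l₁ l₂` means `∀ a ∈ l₁, ∃ b ∈ l₂, TreeLE le a b`. -/
inductive TreeAllLE {Q : Type u} (le : Q → Q → Prop) : List (LTree Q) → List (LTree Q) → Prop
  | nil {l : List (LTree Q)} : TreeAllLE le [] l
  | cons {a : LTree Q} {l₁ l₂ : List (LTree Q)} :
      TreeMemLE le a l₂ → TreeAllLE le l₁ l₂ → TreeAllLE le (a :: l₁) l₂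
end

/-- A (nonempty) transfinite sequence over `Q` : a length `> 0` together with values;
values at indices `≥ length` are irrelevant junk. -/
structure TSeq (Q : Type u) : Type (u + 1) where
  length : Ordinal.{u}
  length_pos : 0 < length
  val : Ordinal.{u} → Q

/-- Sequence embeddability `σ ≼ τ` : there is a strictly increasing (hence injective) map
of the indices of `σ` into the indices of `τ` which respects the quasi-order on values. -/
def SeqLE {Q : Type u} (le : Q → Q → Prop) (σ τ : TSeq Q) : Prop :=
  ∃ f : Ordinal.{u} → Ordinal.{u},
    (∀ i, i < σ.length → f i < τ.length) ∧
    (∀ i j, i < j → j < σ.length → f i < f j) ∧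
    (∀ i, i < σ.length → le (σ.val i) (τ.val (f i)))

/-- A sequence has finite range if only finitely many elements of `Q` occur in it. -/
def TSeq.FinRange {Q : Type u} (σ : TSeq Q) : Prop :=
  (σ.val '' Set.Iio σ.length).Finite

/-- The proper tail of `σ` starting at index `δ` (of length `-δ + |σ|`). -/
noncomputable def TSeq.tail {Q : Type u} (σ : TSeq Q) (δ : Ordinal.{u})
    (h : δ < σ.length) : TSeq Q where
  length := σ.length - δ
  length_pos := Ordinal.lt_sub.mpr (by simpa using h)
  val := fun i => σ.val (δ + i)

/-- A sequence is indecomposable if it embeds into each of its proper tails. -/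
def Indecomposable {Q : Type u} (le : Q → Q → Prop) (σ : TSeq Q) : Prop :=
  ∀ (δ : Ordinal.{u}) (_ : 0 < δ) (h : δ < σ.length), SeqLE le σ (σ.tail δ h)

open Classical in
/-- Concatenation of transfinite sequences: a copy of `τ` placed after a copy of `σ`. -/
noncomputable def TSeq.concat {Q : Type u} (σ τ : TSeq Q) : TSeq Q where
  length := σ.length + τ.length
  length_pos := lt_of_lt_of_le σ.length_pos (le_add_right le_rfl)
  val := fun i => if i < σ.length then σ.val i else τ.val (i - σ.length)

/-- The concatenation `σ + τ₀ + τ₁ + ⋯` of a nonempty finite list of sequences. -/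
noncomputable def TSeq.concatAll {Q : Type u} (σ : TSeq Q) (l : List (TSeq Q)) : TSeq Q :=
  l.foldl TSeq.concat σ

/-- `σ ^ ω` : the concatenation of `ω` many copies of `σ`;
its value at `|σ|·δ + ι` (for `δ < ω`, `ι < |σ|`), i.e. at `i` with `i % |σ| = ι`,
is `σ(ι)`. -/
noncomputable def TSeq.omegaPow {Q : Type u} (σ : TSeq Q) : TSeq Q where
  length := σ.length * omega0
  length_pos := mul_pos σ.length_pos omega0_pos
  val := fun i => σ.val (i % σ.length)

/-- The map `f : T_f(Q) → i^F_{ω^ω}(Q)` : a leaf `·q` is sent to the sequence `⟨q⟩` of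
length `1`, and `·(τ₀,…,τ_{k-1})` is sent to `(f(τ₀) + f(τ₁) + ⋯ + f(τ_{k-1}))^ω`. -/
noncomputable def treeToSeq {Q : Type u} : LTree Q → TSeq Q
  | .leaf q => ⟨1, zero_lt_one, fun _ => q⟩
  | .node t ts =>
      (TSeq.concatAll (treeToSeq t) (ts.attach.map fun s => treeToSeq s.1)).omegaPow
decreasing_by
  · simp; omega
  · have := List.sizeOf_lt_of_mem s.2
    simp; omega

/-! The key fact: an indecomposable sequence that embeds into `σ + τ` embeds into `σ` or into
`τ`. Cut the embedding at the first index sent into the `τ` part; if that index is not `0`,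
indecomposability lets the whole sequence restart there. Every value of `f` is indecomposable
(`ω`-th powers are), so `⟨x⟩ ≼ (f τ₀ + ⋯ + f τₖ)^ω` iff `⟨x⟩ ≼ f τⱼ` for some `j`. For two nodes,
`A^ω ≼ B^ω` iff every piece of `A` embeds into `B`. If so, `A` embeds into finitely many consecutive
copies of `B`, and periodicity extends this to `A^ω ≼ B^ω`. Conversely, `A` is a proper initial
segment of `A^ω`, so each piece of `A` lands below `B·n` for some `n < ω`, hence in a single copy
of `B`, hence in a single piece of `B`. -/

section

variable {Q : Type u} {le : Q → Q → Prop}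

namespace TSeq

def single (q : Q) : TSeq Q := ⟨1, zero_lt_one, fun _ => q⟩

def OccursAt (B ρ : TSeq Q) (β : Ordinal.{u}) : Prop :=
  ∀ i < B.length, ρ.val (β + i) = B.val i

theorem concatAll_cons (σ τ : TSeq Q) (l : List (TSeq Q)) :
    concatAll σ (τ :: l) = concatAll (σ.concat τ) l := rfl

theorem concatAll_induction {P : TSeq Q → Prop} (hP : ∀ σ τ, P σ → P τ → P (σ.concat τ))
    {σ : TSeq Q} {l : List (TSeq Q)} (hσ : P σ) (hl : ∀ τ ∈ l, P τ) : P (concatAll σ l) := by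
  induction l generalizing σ with
  | nil => exact hσ
  | cons τ l ih =>
    rw [List.forall_mem_cons] at hl
    exact ih (hP σ τ hσ hl.1) hl.2

theorem concatAll_map_induction {α : Type*} {P : TSeq Q → Prop}
    (hP : ∀ σ τ, P σ → P τ → P (σ.concat τ)) (F : α → TSeq Q) {a : α} {as : List α}
    (h : ∀ x ∈ a :: as, P (F x)) : P (concatAll (F a) (as.map F)) := by
  rw [List.forall_mem_cons] at h
  exact concatAll_induction hP h.1 (List.forall_mem_map.2 h.2)

theorem concat_val_of_lt {σ τ : TSeq Q} {i : Ordinal} (h : i < σ.length) :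
    (σ.concat τ).val i = σ.val i := if_pos h

theorem concat_val_of_not_lt {σ τ : TSeq Q} {i : Ordinal} (h : ¬ i < σ.length) :
    (σ.concat τ).val i = τ.val (i - σ.length) := if_neg h

theorem omegaPow_val_of_lt {σ : TSeq Q} {i : Ordinal} (hi : i < σ.length) :
    σ.omegaPow.val i = σ.val i :=
  congrArg σ.val (Ordinal.mod_eq_of_lt hi)

theorem length_lt_omegaPow_length (σ : TSeq Q) : σ.length < σ.omegaPow.length := by
  show σ.length < σ.length * ω
  simpa using mul_lt_mul_of_pos_left one_lt_omega0 σ.length_pos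

theorem one_lt_omegaPow_length (σ : TSeq Q) : 1 < σ.omegaPow.length :=
  (Order.one_le_iff_pos.2 σ.length_pos).trans_lt (length_lt_omegaPow_length σ)

theorem occursAt_self (σ : TSeq Q) : σ.OccursAt σ 0 := fun i _ => by rw [zero_add]

theorem occursAt_concat_left (σ τ : TSeq Q) : σ.OccursAt (σ.concat τ) 0 := fun i hi => by
  rw [zero_add, concat_val_of_lt hi]

theorem occursAt_concat_right (σ τ : TSeq Q) : τ.OccursAt (σ.concat τ) σ.length := fun i _ => by
  rw [concat_val_of_not_lt (not_lt.2 le_self_add), Ordinal.add_sub_cancel]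

theorem occursAt_omegaPow (σ : TSeq Q) (k : Ordinal) : σ.OccursAt σ.omegaPow (σ.length * k) :=
  fun i hi => by
    show σ.val ((σ.length * k + i) % σ.length) = _
    rw [Ordinal.mul_add_mod_self, Ordinal.mod_eq_of_lt hi]

theorem occursAt_tail (σ : TSeq Q) (δ : Ordinal) (h : δ < σ.length) :
    (σ.tail δ h).OccursAt σ δ := fun _ _ => rfl

theorem FinRange.concat {σ τ : TSeq Q} (hσ : σ.FinRange) (hτ : τ.FinRange) :
    (σ.concat τ).FinRange := by
  refine (hσ.union hτ).subset ?_
  rintro q ⟨i, hi, rfl⟩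
  by_cases h : i < σ.length
  · exact .inl ⟨i, h, (concat_val_of_lt h).symm⟩
  · exact .inr ⟨i - σ.length, (Ordinal.sub_lt_of_le (not_lt.1 h)).2 hi,
      (concat_val_of_not_lt h).symm⟩

theorem FinRange.omegaPow {σ : TSeq Q} (h : σ.FinRange) : σ.omegaPow.FinRange :=
  h.subset fun _ ⟨i, _, hi⟩ => ⟨i % σ.length, Ordinal.mod_lt i σ.length_pos.ne', hi⟩

end TSeq

open TSeq

theorem seqLE_refl [Std.Refl le] (σ : TSeq Q) : SeqLE le σ σ :=
  ⟨id, fun _ hi => hi, fun _ _ h _ => h, fun _ _ => refl_of le _⟩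

theorem seqLE_trans [IsTrans Q le] {σ τ ρ : TSeq Q} :
    SeqLE le σ τ → SeqLE le τ ρ → SeqLE le σ ρ := by
  rintro ⟨f, hf, hfm, hfv⟩ ⟨g, hg, hgm, hgv⟩
  exact ⟨g ∘ f, fun i hi => hg _ (hf i hi), fun i j hij hj => hgm _ _ (hfm i j hij hj) (hf j hj),
    fun i hi => trans_of le (hfv i hi) (hgv _ (hf i hi))⟩

def SeqLEIn (le : Q → Q → Prop) (σ τ : TSeq Q) (a b : Ordinal.{u}) : Prop :=
  ∃ f : Ordinal.{u} → Ordinal.{u}, StrictMonoOn f (Set.Iio σ.length) ∧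
    ∀ i < σ.length, a ≤ f i ∧ f i < b ∧ le (σ.val i) (τ.val (f i))

section SeqLEIn

variable {χ σ τ ρ B : TSeq Q} {a b c : Ordinal.{u}}

theorem SeqLEIn.lt (h : SeqLEIn le σ τ a b) : a < b := by
  obtain ⟨f, -, hf⟩ := h
  obtain ⟨ha, hb, -⟩ := hf 0 σ.length_pos
  exact ha.trans_lt hb

theorem SeqLEIn.mono {a' b' : Ordinal} (h : SeqLEIn le σ τ a b) (ha : a' ≤ a) (hb : b ≤ b') :
    SeqLEIn le σ τ a' b' := by
  obtain ⟨f, hfm, hf⟩ := h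
  exact ⟨f, hfm, fun i hi => ⟨ha.trans (hf i hi).1, (hf i hi).2.1.trans_le hb, (hf i hi).2.2⟩⟩

theorem TSeq.OccursAt.seqLEIn_iff {β : Ordinal} (hB : B.OccursAt ρ β) :
    SeqLEIn le χ ρ β (β + B.length) ↔ SeqLE le χ B := by
  constructor
  · rintro ⟨f, hfm, hf⟩
    have hlt : ∀ i < χ.length, f i - β < B.length := fun i hi =>
      (Ordinal.sub_lt_of_le (hf i hi).1).2 (hf i hi).2.1
    refine ⟨fun i => f i - β, hlt, fun i j hij hj => ?_, fun i hi => ?_⟩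
    · rw [Ordinal.sub_lt_of_le (hf i (hij.trans hj)).1,
        Ordinal.add_sub_cancel_of_le (hf j hj).1]
      exact hfm (hij.trans hj) hj hij
    · rw [← hB _ (hlt i hi), Ordinal.add_sub_cancel_of_le (hf i hi).1]
      exact (hf i hi).2.2
  · rintro ⟨g, hg, hgm, hgv⟩
    refine ⟨fun i => β + g i, fun i _ j hj hij => add_lt_add_right (hgm i j hij hj) β,
      fun i hi => ⟨le_self_add, add_lt_add_right (hg i hi) β, ?_⟩⟩
    rw [hB _ (hg i hi)]
    exact hgv i hi

theorem seqLE_iff_seqLEIn : SeqLE le χ ρ ↔ SeqLEIn le χ ρ 0 ρ.length := by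
  simpa using (occursAt_self ρ).seqLEIn_iff.symm

theorem TSeq.OccursAt.seqLE [Std.Refl le] {β : Ordinal} (hB : B.OccursAt ρ β)
    (hlen : β + B.length ≤ ρ.length) : SeqLE le B ρ :=
  seqLE_iff_seqLEIn.2 ((hB.seqLEIn_iff.2 (seqLE_refl B)).mono zero_le hlen)

theorem SeqLEIn.concat (hσ : SeqLEIn le σ ρ a b) (hτ : SeqLEIn le τ ρ b c) :
    SeqLEIn le (σ.concat τ) ρ a c := by
  obtain ⟨f, hfm, hf⟩ := hσ
  obtain ⟨g, hgm, hg⟩ := hτ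
  have hsub : ∀ i < (σ.concat τ).length, ¬ i < σ.length → i - σ.length < τ.length :=
    fun i hi hiσ => (Ordinal.sub_lt_of_le (not_lt.1 hiσ)).2 hi
  refine ⟨fun i => if i < σ.length then f i else g (i - σ.length), ?_, fun i hi => ?_⟩
  · intro i hi j hj hij
    dsimp only
    split_ifs with hiσ hjσ hjσ
    · exact hfm hiσ hjσ hij
    · exact (hf i hiσ).2.1.trans_le (hg _ (hsub j hj hjσ)).1
    · exact absurd (hij.trans hjσ) hiσ
    · refine hgm (hsub i (hij.trans hj) hiσ) (hsub j hj hjσ) ?_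
      rwa [Ordinal.sub_lt_of_le (not_lt.1 hiσ), Ordinal.add_sub_cancel_of_le (not_lt.1 hjσ)]
  · dsimp only
    split_ifs with hiσ
    · obtain ⟨h₁, h₂, h₃⟩ := hf i hiσ
      exact ⟨h₁, h₂.trans_le (hg 0 τ.length_pos).1 |>.trans (hg 0 τ.length_pos).2.1,
        by rwa [concat_val_of_lt hiσ]⟩
    · obtain ⟨h₁, h₂, h₃⟩ := hg _ (hsub i hi hiσ)
      exact ⟨(hf 0 σ.length_pos).1.trans ((hf 0 σ.length_pos).2.1.le.trans h₁), h₂,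
        by rwa [concat_val_of_not_lt hiσ]⟩

end SeqLEIn

section Indecomposable

variable {χ σ τ A B : TSeq Q}

theorem indecomposable_iff_seqLEIn :
    Indecomposable le σ ↔ ∀ δ, 0 < δ → δ < σ.length → SeqLEIn le σ σ δ σ.length := by
  refine forall_congr' fun δ => forall_congr' fun _ => forall_congr' fun h => ?_
  rw [← (occursAt_tail σ δ h).seqLEIn_iff,
    show δ + (σ.tail δ h).length = σ.length from Ordinal.add_sub_cancel_of_le h.le]

theorem indecomposable_single (q : Q) : Indecomposable le (single q) :=
  fun _ hδ h => absurd (Order.lt_one_iff.1 h) hδ.ne'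

theorem indecomposable_omegaPow [Std.Refl le] (σ : TSeq Q) : Indecomposable le σ.omegaPow := by
  refine indecomposable_iff_seqLEIn.2 fun δ _ hδ => ?_
  have hσ : σ.length ≠ 0 := σ.length_pos.ne'
  -- shift by a multiple of `σ.length` beyond `δ`; periodicity keeps the values
  set ν := Order.succ (δ / σ.length)
  have hν : ν < ω := isSuccLimit_omega0.succ_lt ((lt_mul_iff_div_lt hσ).1 hδ)
  refine ⟨fun i => σ.length * ν + i, fun i _ j _ hij => add_lt_add_right hij _,
    fun i hi => ⟨(lt_mul_succ_div δ hσ).le.trans le_self_add, ?_, ?_⟩⟩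
  · calc σ.length * ν + i < σ.length * ν + σ.length * ω := add_lt_add_right hi _
      _ = σ.length * ω := by rw [← mul_add, add_omega0 hν]
  · show le (σ.val (i % σ.length)) (σ.val ((σ.length * ν + i) % σ.length))
    rw [mul_add_mod_self]
    exact refl_of le _

theorem Indecomposable.seqLEIn_split [IsTrans Q le] (hχ : Indecomposable le χ) {a c : Ordinal}
    (h : SeqLEIn le χ τ a c) (b : Ordinal) : SeqLEIn le χ τ a b ∨ SeqLEIn le χ τ b c := by
  obtain ⟨f, hfm, hf⟩ := h
  by_cases hall : ∀ i < χ.length, f i < b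
  · exact .inl ⟨f, hfm, fun i hi => ⟨(hf i hi).1, hall i hi, (hf i hi).2.2⟩⟩
  right
  simp only [not_forall, not_lt] at hall
  obtain ⟨i₀, hi₀, hbi₀⟩ := hall
  set δ := sInf {i | i < χ.length ∧ b ≤ f i}
  have hδ : δ < χ.length ∧ b ≤ f δ :=
    csInf_mem (s := {i | i < χ.length ∧ b ≤ f i}) ⟨i₀, hi₀, hbi₀⟩
  have hle : ∀ i < χ.length, δ ≤ i → b ≤ f i := fun i hi hδi =>
    hδ.2.trans (hfm.monotoneOn hδ.1 hi hδi)
  rcases (zero_le : 0 ≤ δ).eq_or_lt with h0 | h0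
  · exact ⟨f, hfm, fun i hi => ⟨hle i hi (h0 ▸ zero_le), (hf i hi).2⟩⟩
  · obtain ⟨g, hgm, hg⟩ := indecomposable_iff_seqLEIn.1 hχ δ h0 hδ.1
    refine ⟨f ∘ g, fun i hi j hj hij => hfm (hg i hi).2.1 (hg j hj).2.1 (hgm hi hj hij),
      fun i hi => ?_⟩
    obtain ⟨hgi₁, hgi₂, hgi₃⟩ := hg i hi
    exact ⟨hle _ hgi₂ hgi₁, (hf _ hgi₂).2.1, trans_of le hgi₃ (hf _ hgi₂).2.2⟩

theorem Indecomposable.seqLE_concat_iff [Std.Refl le] [IsTrans Q le]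
    (hχ : Indecomposable le χ) : SeqLE le χ (σ.concat τ) ↔ SeqLE le χ σ ∨ SeqLE le χ τ := by
  constructor
  · intro h
    refine (hχ.seqLEIn_split (seqLE_iff_seqLEIn.1 h) σ.length).imp (fun h => ?_) (fun h => ?_)
    · exact (occursAt_concat_left σ τ).seqLEIn_iff.1 (by rwa [zero_add])
    · exact (occursAt_concat_right σ τ).seqLEIn_iff.1 h
  · rintro (h | h)
    · exact seqLE_trans h ((occursAt_concat_left σ τ).seqLE (by rw [zero_add]; exact le_self_add))
    · exact seqLE_trans h ((occursAt_concat_right σ τ).seqLE le_rfl)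

theorem Indecomposable.seqLE_concatAll_iff [Std.Refl le] [IsTrans Q le]
    (hχ : Indecomposable le χ) {l : List (TSeq Q)} :
    SeqLE le χ (concatAll σ l) ↔ ∃ τ ∈ σ :: l, SeqLE le χ τ := by
  induction l generalizing σ with
  | nil => simp [concatAll]
  | cons τ l ih =>
    rw [concatAll_cons, ih]
    simp only [List.mem_cons, exists_eq_or_imp, hχ.seqLE_concat_iff, or_assoc]

theorem Indecomposable.seqLE_of_seqLEIn_omegaPow [IsTrans Q le] (hχ : Indecomposable le χ)
    {b : Ordinal} (h : SeqLEIn le χ B.omegaPow 0 b) (hb : b < B.omegaPow.length) :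
    SeqLE le χ B := by
  obtain ⟨k, hk, hbk⟩ := (lt_mul_iff_of_isSuccLimit isSuccLimit_omega0).1 hb
  obtain ⟨n, rfl⟩ := lt_omega0.1 hk
  replace h := h.mono le_rfl hbk.le
  clear hb hk hbk
  induction n with
  | zero => simpa using h.lt
  | succ n ih =>
    rw [Nat.cast_succ, mul_add_one] at h
    rcases hχ.seqLEIn_split h (B.length * n) with h | h
    · exact ih h
    · exact (occursAt_omegaPow B n).seqLEIn_iff.1 h

end Indecomposable

section OmegaPow

variable {χ σ A B : TSeq Q}

theorem SeqLEIn.omegaPow_seqLE_omegaPow {n : ℕ} (h : SeqLEIn le A B.omegaPow 0 (B.length * n)) :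
    SeqLE le A.omegaPow B.omegaPow := by
  have hn : n ≠ 0 := by
    rintro rfl
    simpa using h.lt
  obtain ⟨f, hfm, hf⟩ := h
  have hA : A.length ≠ 0 := A.length_pos.ne'
  set c := B.length * n
  -- the `q`-th copy of `A` goes to the `q`-th block `[c * q, c * (q + 1))`, which has the
  -- same contents as `[0, c)` because `c` is a multiple of `B.length`
  have hblock : ∀ i, c * (i / A.length) + f (i % A.length) < c * (i / A.length + 1) := by
    intro i
    rw [mul_add_one]
    exact add_lt_add_right (hf _ (mod_lt i hA)).2.1 _
  refine ⟨fun i => c * (i / A.length) + f (i % A.length), fun i hi => ?_, fun i j hij hj => ?_,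
    fun i _ => ?_⟩
  · have hq : i / A.length < ω := (lt_mul_iff_div_lt hA).1 hi
    calc _ < c * (i / A.length + 1) := hblock i
      _ ≤ c * ω := by gcongr; exact (isSuccLimit_omega0.add_one_lt hq).le
      _ = B.length * ω := by rw [mul_assoc, natCast_mul_omega0 (Nat.pos_of_ne_zero hn)]
  · rcases (div_le_left hij.le A.length).eq_or_lt with hq | hq
    · have hr : i % A.length < j % A.length := by
        rw [← div_add_mod i A.length, ← div_add_mod j A.length, hq] at hij
        exact (add_lt_add_iff_left _).1 hij
      dsimp only
      rw [hq]
      exact add_lt_add_right (hfm (mod_lt i hA) (mod_lt j hA) hr) _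
    · calc _ < c * (i / A.length + 1) := hblock i
        _ ≤ c * (j / A.length) := by gcongr; exact Order.add_one_le_of_lt hq
        _ ≤ _ := le_self_add
  · show le (A.val (i % A.length)) (B.val ((c * (i / A.length) + f (i % A.length)) % B.length))
    rw [mul_assoc, mul_add_mod_self]
    exact (hf _ (mod_lt i hA)).2.2

theorem SeqLEIn.concatAll_omegaPow {l : List (TSeq Q)} {n : ℕ}
    (h : SeqLEIn le σ B.omegaPow 0 (B.length * n)) (hl : ∀ τ ∈ l, SeqLE le τ B) :
    SeqLEIn le (concatAll σ l) B.omegaPow 0 (B.length * ↑(n + l.length)) := by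
  induction l generalizing σ n with
  | nil => simpa [concatAll] using h
  | cons τ l ih =>
    rw [List.forall_mem_cons] at hl
    have hτ : SeqLEIn le τ B.omegaPow (B.length * n) (B.length * ↑(n + 1)) := by
      rw [Nat.cast_succ, mul_add_one]
      exact (occursAt_omegaPow B n).seqLEIn_iff.2 hl.1
    rw [concatAll_cons, List.length_cons, ← add_assoc, Nat.add_right_comm]
    exact ih (h.concat hτ) hl.2

theorem omegaPow_concatAll_seqLE_omegaPow {l : List (TSeq Q)} (hl : ∀ τ ∈ σ :: l, SeqLE le τ B) :
    SeqLE le (concatAll σ l).omegaPow B.omegaPow := by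
  rw [List.forall_mem_cons] at hl
  have hσ : SeqLEIn le σ B.omegaPow 0 (B.length * ↑(1 : ℕ)) := by
    simpa using (occursAt_omegaPow B 0).seqLEIn_iff.2 hl.1
  exact (hσ.concatAll_omegaPow hl.2).omegaPow_seqLE_omegaPow

theorem Indecomposable.seqLE_of_omegaPow_seqLE_omegaPow [IsTrans Q le]
    (hχ : Indecomposable le χ) (hχA : SeqLE le χ A) (hAB : SeqLE le A.omegaPow B.omegaPow) :
    SeqLE le χ B := by
  obtain ⟨e, he, hem, hev⟩ := hχA
  obtain ⟨g, hg, hgm, hgv⟩ := hAB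
  have hA := length_lt_omegaPow_length A
  have hgA : ∀ i < χ.length, g (e i) < g A.length := fun i hi => hgm _ _ (he i hi) hA
  refine hχ.seqLE_of_seqLEIn_omegaPow ⟨g ∘ e, fun i hi j hj hij => ?_, fun i hi => ?_⟩ (hg _ hA)
  · exact hgm _ _ (hem i j hij hj) ((he j hj).trans hA)
  · have hv := hgv _ ((he i hi).trans hA)
    rw [omegaPow_val_of_lt (he i hi)] at hv
    exact ⟨zero_le, hgA i hi, trans_of le (hev i hi) hv⟩

theorem single_seqLE_iff {q : Q} : SeqLE le (single q) σ ↔ ∃ i < σ.length, le q (σ.val i) := by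
  constructor
  · rintro ⟨f, hf, -, hfv⟩
    exact ⟨f 0, hf 0 zero_lt_one, hfv 0 zero_lt_one⟩
  · rintro ⟨i, hi, hq⟩
    refine ⟨fun _ => i, fun _ _ => hi, fun j k hjk hk => ?_, fun _ _ => hq⟩
    exact absurd (Order.lt_one_iff.1 hk ▸ hjk) not_lt_zero

theorem single_seqLE_omegaPow_iff {q : Q} :
    SeqLE le (single q) σ.omegaPow ↔ SeqLE le (single q) σ := by
  simp only [single_seqLE_iff]
  constructor
  · rintro ⟨i, -, hi⟩
    exact ⟨i % σ.length, mod_lt i σ.length_pos.ne', hi⟩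
  · rintro ⟨i, hi, hq⟩
    exact ⟨i, hi.trans (length_lt_omegaPow_length σ), by rwa [omegaPow_val_of_lt hi]⟩

theorem not_seqLE_single (hσ : 1 < σ.length) {q : Q} : ¬ SeqLE le σ (single q) := by
  rintro ⟨f, hf, hfm, -⟩
  have h₀ := Order.lt_one_iff.1 (hf 0 (zero_lt_one.trans hσ))
  have h₁ := Order.lt_one_iff.1 (hf 1 hσ)
  exact (hfm 0 1 zero_lt_one hσ).ne (h₀.trans h₁.symm)

end OmegaPow

namespace LTree

theorem sizeOf_lt_sizeOf_node {d t : LTree Q} {ts : List (LTree Q)} (h : d ∈ t :: ts) :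
    sizeOf d < sizeOf (node t ts) := by
  rcases List.mem_cons.1 h with rfl | h
  · simp only [node.sizeOf_spec]
    omega
  · have := List.sizeOf_lt_of_mem h
    simp only [node.sizeOf_spec]
    omega

@[elab_as_elim]
theorem induction {motive : LTree Q → Prop} (leaf : ∀ q, motive (leaf q))
    (node : ∀ t ts, (∀ d ∈ t :: ts, motive d) → motive (node t ts)) (τ : LTree Q) : motive τ :=
  match τ with
  | .leaf q => leaf q
  | .node t ts => node t ts fun d _ => induction leaf node d
termination_by τ
decreasing_by exact sizeOf_lt_sizeOf_node ‹_›

end LTree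

open LTree

theorem treeMemLE_iff {a : LTree Q} {l : List (LTree Q)} :
    TreeMemLE le a l ↔ ∃ b ∈ l, TreeLE le a b := by
  induction l with
  | nil => exact ⟨nofun, nofun⟩
  | cons b l ih =>
    simp only [List.mem_cons, exists_eq_or_imp, ← ih]
    exact ⟨fun | .head h => .inl h | .tail h => .inr h, fun | .inl h => .head h | .inr h => .tail h⟩

theorem treeAllLE_iff {l₁ l₂ : List (LTree Q)} :
    TreeAllLE le l₁ l₂ ↔ ∀ a ∈ l₁, ∃ b ∈ l₂, TreeLE le a b := by
  induction l₁ with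
  | nil => exact ⟨fun _ => nofun, fun _ => .nil⟩
  | cons a l ih =>
    rw [List.forall_mem_cons, ← ih, ← treeMemLE_iff]
    exact ⟨fun | .cons h₁ h₂ => ⟨h₁, h₂⟩, fun ⟨h₁, h₂⟩ => .cons h₁ h₂⟩

theorem treeLE_leaf_leaf_iff {x y : Q} : TreeLE le (leaf x) (leaf y) ↔ le x y :=
  ⟨fun | .leaf h => h, .leaf⟩

theorem treeLE_leaf_node_iff {x : Q} {t : LTree Q} {ts : List (LTree Q)} :
    TreeLE le (leaf x) (node t ts) ↔ ∃ d ∈ t :: ts, TreeLE le (leaf x) d := by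
  rw [← treeMemLE_iff]
  exact ⟨fun | .leafNode h => h, .leafNode⟩

theorem not_treeLE_node_leaf {s : LTree Q} {ss : List (LTree Q)} {y : Q} :
    ¬ TreeLE le (node s ss) (leaf y) := nofun

theorem treeLE_node_node_iff {s t : LTree Q} {ss ts : List (LTree Q)} :
    TreeLE le (node s ss) (node t ts) ↔ ∀ c ∈ s :: ss, ∃ d ∈ t :: ts, TreeLE le c d := by
  rw [← treeAllLE_iff]
  exact ⟨fun | .node h => h, .node⟩

theorem treeToSeq_leaf (q : Q) : treeToSeq (leaf q) = single q := by
  rw [treeToSeq, single]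

theorem treeToSeq_node (t : LTree Q) (ts : List (LTree Q)) :
    treeToSeq (node t ts) = (concatAll (treeToSeq t) (ts.map treeToSeq)).omegaPow := by
  rw [treeToSeq]
  congr 2
  simp

theorem indecomposable_treeToSeq [Std.Refl le] : ∀ τ : LTree Q, Indecomposable le (treeToSeq τ)
  | .leaf q => treeToSeq_leaf q ▸ indecomposable_single q
  | .node t ts => treeToSeq_node t ts ▸ indecomposable_omegaPow _

theorem length_treeToSeq_lt (τ : LTree Q) : (treeToSeq τ).length < ω ^ ω := by
  induction τ using LTree.induction with
  | leaf q =>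
    rw [treeToSeq_leaf]
    exact one_lt_omega0.trans (left_lt_opow one_lt_omega0 one_lt_omega0)
  | node t ts ih =>
    rw [treeToSeq_node]
    have hmul := isPrincipal_mul_omega0_opow_opow 1
    rw [opow_one] at hmul
    exact hmul (concatAll_map_induction (P := fun σ => σ.length < ω ^ ω)
      (fun _ _ hσ hτ => isPrincipal_add_omega0_opow ω hσ hτ) _ ih)
      (left_lt_opow one_lt_omega0 one_lt_omega0)

theorem finRange_treeToSeq (τ : LTree Q) : (treeToSeq τ).FinRange := by
  induction τ using LTree.induction with
  | leaf q =>
    rw [treeToSeq_leaf]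
    exact (Set.finite_singleton q).subset (Set.image_subset_iff.2 fun _ _ => rfl)
  | node t ts ih =>
    rw [treeToSeq_node]
    exact (concatAll_map_induction (fun _ _ => FinRange.concat) _ ih).omegaPow

theorem treeLE_iff_seqLE [Std.Refl le] [IsTrans Q le] (σ τ : LTree Q) :
    TreeLE le σ τ ↔ SeqLE le (treeToSeq σ) (treeToSeq τ) := by
  have hχ := indecomposable_treeToSeq (le := le)
  have concatAll_iff : ∀ (c t : LTree Q) (ts : List (LTree Q)),
      SeqLE le (treeToSeq c) (concatAll (treeToSeq t) (ts.map treeToSeq)) ↔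
        ∃ d ∈ t :: ts, SeqLE le (treeToSeq c) (treeToSeq d) := fun c t ts => by
    rw [(hχ c).seqLE_concatAll_iff, ← List.map_cons]
    simp
  induction τ using LTree.induction generalizing σ with
  | leaf y =>
    cases σ with
    | leaf x =>
      rw [treeLE_leaf_leaf_iff, treeToSeq_leaf, treeToSeq_leaf, single_seqLE_iff]
      exact ⟨fun h => ⟨0, zero_lt_one, h⟩, fun ⟨_, _, h⟩ => h⟩
    | node s ss =>
      rw [treeToSeq_node, treeToSeq_leaf]
      exact iff_of_false not_treeLE_node_leaf (not_seqLE_single (one_lt_omegaPow_length _))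
  | node t ts ih =>
    cases σ with
    | leaf x =>
      rw [treeLE_leaf_node_iff, treeToSeq_node, treeToSeq_leaf, single_seqLE_omegaPow_iff,
        ← treeToSeq_leaf, concatAll_iff]
      exact exists_congr fun d => and_congr_right fun hd => ih d hd _
    | node s ss =>
      rw [treeLE_node_node_iff, treeToSeq_node, treeToSeq_node]
      constructor
      · intro h
        refine omegaPow_concatAll_seqLE_omegaPow ?_
        rw [← List.map_cons, List.forall_mem_map]
        intro c hc
        obtain ⟨d, hd, hcd⟩ := h c hc
        exact seqLE_trans ((ih d hd c).1 hcd) ((concatAll_iff d t ts).2 ⟨d, hd, seqLE_refl _⟩)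
      · intro h c hc
        obtain ⟨d, hd, hcd⟩ := (concatAll_iff c t ts).1 <|
          (hχ c).seqLE_of_omegaPow_seqLE_omegaPow ((concatAll_iff c s ss).2 ⟨c, hc, seqLE_refl _⟩) h
        exact ⟨d, hd, (ih d hd c).2 hcd⟩

end

/-- For any nonempty quasi-order `(Q, ≤_Q)`, the map `f : T_f(Q) → i^F_{ω^ω}(Q)`
defined by `f(·q) = ⟨q⟩` and `f(·(τ₀,…,τ_{k-1})) = (f(τ₀) + ⋯ + f(τ_{k-1}))^ω`
is a well-defined order-embedding: every value is an indecomposable finite-range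
sequence of length `< ω^ω`, and `σ ≤_T τ ↔ f(σ) ≼ f(τ)`. -/
theorem treeToSeq_orderEmbedding {Q : Type u} [Nonempty Q]
    (le : Q → Q → Prop) (hqo : IsQO le) :
    (∀ τ : LTree Q, (treeToSeq τ).length < omega0 ^ omega0 ∧
      (treeToSeq τ).FinRange ∧ Indecomposable le (treeToSeq τ)) ∧
    (∀ σ τ : LTree Q, TreeLE le σ τ ↔ SeqLE le (treeToSeq σ) (treeToSeq τ)) := by
  have : Std.Refl le := ⟨hqo.1⟩
  have : IsTrans Q le := ⟨hqo.2⟩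
  exact ⟨fun τ => ⟨length_treeToSeq_lt τ, finRange_treeToSeq τ, indecomposable_treeToSeq τ⟩,
    treeLE_iff_seqLE⟩
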